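/- If Q is a real trigonometric polynomial of degree n with a zero of order k at 0, then for all t ∈ [0, 2π], Q(t) ≤ M · n^k t^k / k!, where M = max_{[0,2π]} |Q|. -/

import Mathlib

open Real Finset Polynomial

/-!
Bernstein's inequality `|Q'| ≤ n sup |Q|` is proved by comparison with a sine. If `|Q| < 1` and
`Q'(a) > n`, then `h = Q - sin (n (x - a) + arcsin (Q a))` vanishes at `a` with positive slope,
while at the extrema of the sine it has the sign opposite to the sine. Hence `h` alternates in
sign at `2n + 2` points of a half-open period and has `2n + 1` zeros there, one more than allowed:
`exp (i n t) h(t)` is a polynomial of degree `2n` in `exp (i t)`, and `t ↦ exp (i t)` is injective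
on a half-open period.
Iterating, `|Q^(k)| ≤ n^k M`; as the first `k` derivatives of `Q` vanish at `0`, Taylor's
theorem gives `|Q t| ≤ M n^k t^k / k!`.
-/

theorem norm_le_of_iteratedDeriv_eq_zero {E : Type*} [NormedAddCommGroup E] [NormedSpace ℝ E]
    {k : ℕ} {f : ℝ → E} {C : ℝ} (hf : ContDiff ℝ k f) (hzero : ∀ i < k, iteratedDeriv i f 0 = 0)
    {t : ℝ} (ht : 0 ≤ t) (hC : ∀ x ∈ Set.Icc 0 t, ‖iteratedDeriv k f x‖ ≤ C) :
    ‖f t‖ ≤ C * t ^ k / k.factorial := by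
  induction k generalizing f t with
  | zero => simpa using hC t ⟨ht, le_rfl⟩
  | succ k ih =>
    rw [Nat.cast_add_one] at hf
    obtain ⟨hdiff, -, hderiv⟩ := contDiff_succ_iff_deriv.mp hf
    have hderiv_le : ∀ x ∈ Set.Ico 0 t, ‖deriv f x‖ ≤ C * x ^ k / k.factorial := fun x hx =>
      ih hderiv (fun i hi => by simpa [iteratedDeriv_succ'] using hzero (i + 1) (by omega)) hx.1
        fun y hy => by simpa [iteratedDeriv_succ'] using hC y ⟨hy.1, hy.2.trans hx.2.le⟩
    have hB : ∀ x, HasDerivAt (fun x => C * x ^ (k + 1) / (k + 1).factorial)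
        (C * x ^ k / k.factorial) x := by
      intro x
      refine (((hasDerivAt_pow (k + 1) x).const_mul C).div_const _).congr_deriv ?_
      rw [Nat.factorial_succ, add_tsub_cancel_right]
      push_cast
      field_simp
    refine image_norm_le_of_norm_deriv_right_le_deriv_boundary hdiff.continuous.continuousOn
      (fun x _ => (hdiff x).hasDerivAt.hasDerivWithinAt) ?_ hB hderiv_le ⟨ht, le_rfl⟩
    simpa using hzero 0 k.succ_pos

theorem exists_strictMono_zeros_of_alternating {f : ℝ → ℝ} (hf : Continuous f) {x : ℕ → ℝ}
    (hx : StrictMono x) (halt : ∀ i, 0 < (-1) ^ i * f (x i)) :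
    ∃ z : ℕ → ℝ, StrictMono z ∧ ∀ i, z i ∈ Set.Ioo (x i) (x (i + 1)) ∧ f (z i) = 0 := by
  have hzero : ∀ i, ∃ z ∈ Set.Ioo (x i) (x (i + 1)), f z = 0 := by
    intro i
    have hi := halt i
    have hi' := halt (i + 1)
    rw [pow_succ] at hi'
    rcases neg_one_pow_eq_or ℝ i with h | h <;> rw [h] at hi hi'
    · exact intermediate_value_Ioo' (hx i.lt_succ_self).le hf.continuousOn
        ⟨by linarith, by linarith⟩
    · exact intermediate_value_Ioo (hx i.lt_succ_self).le hf.continuousOn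
        ⟨by linarith, by linarith⟩
  choose z hz using hzero
  exact ⟨z, strictMono_nat_of_lt_succ fun i => (hz i).1.2.trans (hz (i + 1)).1.1, hz⟩

theorem exists_strictMono_alternating_of_deriv_pos {h : ℝ → ℝ} {e : ℕ → ℝ} (he : StrictMono e)
    (halt : ∀ m, 0 < (-1) ^ m * h (e m)) {a : ℝ} (ha : a ∈ Set.Ioo (e 0) (e 1)) (hha : h a = 0)
    (hh' : 0 < deriv h a) :
    ∃ x : ℕ → ℝ, StrictMono x ∧ (∀ i, 0 < (-1) ^ i * h (x i)) ∧ x 0 = e 0 ∧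
      ∀ m, x (m + 3) = e (m + 1) := by
  have hsign := eventually_nhdsWithin_sign_eq_of_deriv_pos hh' hha
  obtain ⟨w₁, hw₁, hw₁a⟩ :=
    ((hsign.filter_mono nhdsWithin_le_nhds).and (Ioo_mem_nhdsLT ha.1)).exists
  obtain ⟨w₂, hw₂, hw₂a⟩ :=
    ((hsign.filter_mono nhdsWithin_le_nhds).and (Ioo_mem_nhdsGT ha.2)).exists
  rw [sign_neg (sub_neg.mpr hw₁a.2), sign_eq_neg_one_iff] at hw₁
  rw [sign_pos (sub_pos.mpr hw₂a.1), sign_eq_one_iff] at hw₂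
  let x : ℕ → ℝ
    | 0 => e 0
    | 1 => w₁
    | 2 => w₂
    | m + 3 => e (m + 1)
  refine ⟨x, strictMono_nat_of_lt_succ fun i => ?_, fun i => ?_, rfl, fun m => rfl⟩
  · rcases i with _ | _ | _ | m
    exacts [hw₁a.1, hw₁a.2.trans hw₂a.1, hw₂a.2, he (m + 1).lt_succ_self]
  · rcases i with _ | _ | _ | m
    · simpa using halt 0
    · simpa [x] using hw₁
    · simpa [x] using hw₂
    · simpa [x, pow_succ] using halt (m + 1)

theorem neg_one_pow_mul_sub_sin_pos {q : ℝ} (hq : |q| < 1) (m : ℕ) :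
    0 < (-1) ^ m * (q - sin (m * π - π / 2)) := by
  have hq' : |(-1) ^ m * q| < 1 := by simpa using hq
  have hsq : ((-1 : ℝ) ^ m) ^ 2 = 1 := by rw [← pow_mul, mul_comm, (even_two_mul m).neg_one_pow]
  rw [sin_sub_pi_div_two, cos_nat_mul_pi]
  nlinarith [neg_abs_le ((-1) ^ m * q)]

theorem exp_pow_mul_cos_add_sin (t A B : ℝ) {n j : ℕ} (hj : j ≤ n) :
    Complex.exp (t * Complex.I) ^ n * ((A * cos (j * t) + B * sin (j * t) : ℝ) : ℂ) =
      (A - Complex.I * B) / 2 * Complex.exp (t * Complex.I) ^ (n + j) +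
        (A + Complex.I * B) / 2 * Complex.exp (t * Complex.I) ^ (n - j) := by
  set z := Complex.exp (t * Complex.I)
  have hz : z ≠ 0 := Complex.exp_ne_zero _
  have hpos : Complex.exp (j * t * Complex.I) = z ^ j := by
    rw [← Complex.exp_nat_mul]; ring_nf
  have hneg : Complex.exp (-(j * t) * Complex.I) = (z ^ j)⁻¹ := by
    rw [← hpos, ← Complex.exp_neg]; ring_nf
  have hcos : ((cos (j * t) : ℝ) : ℂ) = (z ^ j + (z ^ j)⁻¹) / 2 := by
    push_cast; rw [← hneg, ← hpos, ← Complex.two_cos]; ring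
  have hsin : ((sin (j * t) : ℝ) : ℂ) = ((z ^ j)⁻¹ - z ^ j) * Complex.I / 2 := by
    push_cast; rw [← hneg, ← hpos, ← Complex.two_sin]; ring
  rw [pow_add, pow_sub₀ z hz hj, Complex.ofReal_add, Complex.ofReal_mul, Complex.ofReal_mul, hcos,
    hsin]
  field_simp
  ring_nf

noncomputable def trigSum (n : ℕ) : ((ℕ → ℝ) × (ℕ → ℝ)) →ₗ[ℝ] ℝ → ℝ where
  toFun c t := c.1 0 + ∑ j ∈ Icc 1 n, (c.1 j * cos (j * t) + c.2 j * sin (j * t))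
  map_add' c d := by
    ext t
    simp only [Prod.fst_add, Prod.snd_add, Pi.add_apply, add_mul, sum_add_distrib]
    ring
  map_smul' r c := by
    ext t
    simp only [Prod.smul_fst, Prod.smul_snd, Pi.smul_apply, smul_eq_mul, RingHom.id_apply,
      mul_add, mul_sum, mul_assoc]

noncomputable def trigPoly (n : ℕ) : Submodule ℝ (ℝ → ℝ) := LinearMap.range (trigSum n)

theorem trigSum_apply (n : ℕ) (c : (ℕ → ℝ) × (ℕ → ℝ)) (t : ℝ) :
    trigSum n c t = c.1 0 + ∑ j ∈ Icc 1 n, (c.1 j * cos (j * t) + c.2 j * sin (j * t)) := rfl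

noncomputable def derivCoeffs (c : (ℕ → ℝ) × (ℕ → ℝ)) : (ℕ → ℝ) × (ℕ → ℝ) :=
  (fun j => j * c.2 j, fun j => -(j * c.1 j))

theorem hasDerivAt_trigSum (n : ℕ) (c : (ℕ → ℝ) × (ℕ → ℝ)) (x : ℝ) :
    HasDerivAt (trigSum n c) (trigSum n (derivCoeffs c) x) x := by
  have hterm : ∀ j : ℕ, HasDerivAt (fun t => c.1 j * cos (j * t) + c.2 j * sin (j * t))
      (j * c.2 j * cos (j * x) + -(j * c.1 j) * sin (j * x)) x := by
    intro j
    have hlin := (hasDerivAt_id x).const_mul (j : ℝ)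
    refine ((hlin.cos.const_mul (c.1 j)).add (hlin.sin.const_mul (c.2 j))).congr_deriv ?_
    simp only [id, mul_one]
    ring
  refine ((HasDerivAt.fun_sum fun j _ => hterm j).const_add (c.1 0)).congr_deriv ?_
  simp [trigSum_apply, derivCoeffs]

theorem exists_polynomial_eval_exp_eq (n : ℕ) (c : (ℕ → ℝ) × (ℕ → ℝ)) :
    ∃ p : ℂ[X], p.natDegree ≤ 2 * n ∧ ∀ t : ℝ,
      p.eval (Complex.exp (t * Complex.I)) = Complex.exp (t * Complex.I) ^ n * trigSum n c t := by
  obtain ⟨A, B⟩ := c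
  refine ⟨C (A 0 : ℂ) * X ^ n + ∑ j ∈ Icc 1 n,
      (C ((A j - Complex.I * B j) / 2) * X ^ (n + j) +
        C ((A j + Complex.I * B j) / 2) * X ^ (n - j)), ?_, fun t => ?_⟩
  · refine natDegree_add_le_of_degree_le ((natDegree_C_mul_X_pow_le _ _).trans (by omega))
      (natDegree_sum_le_of_forall_le _ _ fun j hj => ?_)
    have := (mem_Icc.mp hj).2
    exact natDegree_add_le_of_degree_le ((natDegree_C_mul_X_pow_le _ _).trans (by omega))
      ((natDegree_C_mul_X_pow_le _ _).trans (by omega))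
  · simp only [trigSum_apply, eval_add, eval_mul, eval_pow, eval_C, eval_X, eval_finsetSum,
      Complex.ofReal_add, Complex.ofReal_sum, mul_add, mul_sum]
    congr 1
    · ring
    · refine sum_congr rfl fun j hj => ?_
      rw [← mul_add, ← Complex.ofReal_add]
      exact (exp_pow_mul_cos_add_sin t _ _ (mem_Icc.mp hj).2).symm

namespace trigPoly

variable {n : ℕ} {Q : ℝ → ℝ}

theorem deriv_mem (hQ : Q ∈ trigPoly n) : deriv Q ∈ trigPoly n := by
  obtain ⟨c, rfl⟩ := hQ
  exact ⟨derivCoeffs c, funext fun x => (hasDerivAt_trigSum n c x).deriv.symm⟩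

theorem iteratedDeriv_mem (hQ : Q ∈ trigPoly n) (k : ℕ) : iteratedDeriv k Q ∈ trigPoly n := by
  induction k with
  | zero => simpa using hQ
  | succ k ih => simpa [iteratedDeriv_succ] using deriv_mem ih

theorem contDiff (hQ : Q ∈ trigPoly n) {m : WithTop ℕ∞} : ContDiff ℝ m Q := by
  obtain ⟨c, rfl⟩ := hQ
  change ContDiff ℝ m fun t => c.1 0 + ∑ j ∈ Icc 1 n, (c.1 j * cos (j * t) + c.2 j * sin (j * t))
  fun_prop

theorem differentiable (hQ : Q ∈ trigPoly n) : Differentiable ℝ Q :=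
  (contDiff hQ (m := 1)).differentiable one_ne_zero

theorem periodic (hQ : Q ∈ trigPoly n) : Function.Periodic Q (2 * π) := by
  obtain ⟨c, rfl⟩ := hQ
  intro t
  simp only [trigSum_apply, mul_add]
  congr 1
  refine sum_congr rfl fun j _ => ?_
  rw [cos_periodic.nat_mul j, sin_periodic.nat_mul j]

theorem sin_mul_add_mem (hn : n ≠ 0) (φ : ℝ) : (fun x => sin (n * x + φ)) ∈ trigPoly n := by
  refine ⟨(Pi.single n (sin φ), Pi.single n (cos φ)), funext fun x => ?_⟩
  rw [trigSum_apply, sum_eq_single_of_mem n (mem_Icc.mpr ⟨Nat.one_le_iff_ne_zero.mpr hn, le_rfl⟩)]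
  · simp [hn.symm, sin_add]
    ring
  · intro j _ hj
    simp [hj]

theorem card_le_of_forall_eq_zero (hQ : Q ∈ trigPoly n) (hQ0 : Q ≠ 0) {a : ℝ} {S : Finset ℝ}
    (hS : ∀ x ∈ S, x ∈ Set.Ico a (a + 2 * π) ∧ Q x = 0) : #S ≤ 2 * n := by
  obtain ⟨c, rfl⟩ := hQ
  obtain ⟨p, hdeg, hp⟩ := exists_polynomial_eval_exp_eq n c
  have hp0 : p ≠ 0 := by
    rintro rfl
    refine hQ0 (funext fun t => ?_)
    simpa [Complex.exp_ne_zero] using (hp t).symm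
  have hinj : Set.InjOn (fun x : ℝ => Complex.exp (x * Complex.I)) S := fun x hx y hy hxy =>
    Circle.exp_injOn_Ico (by linarith) (hS x hx).1 (hS y hy).1
      (Subtype.ext (by simpa [Circle.coe_exp] using hxy))
  rw [← card_image_of_injOn hinj]
  refine (card_le_degree_of_subset_roots fun z hz => ?_).trans hdeg
  obtain ⟨x, hx, rfl⟩ := mem_image.mp hz
  rw [mem_roots hp0, IsRoot, hp x, (hS x hx).2, Complex.ofReal_zero, mul_zero]

theorem add_two_pi_lt_of_alternating (hQ : Q ∈ trigPoly n) {x : ℕ → ℝ} (hx : StrictMono x)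
    (halt : ∀ i, 0 < (-1) ^ i * Q (x i)) : x 0 + 2 * π < x (2 * n + 1) := by
  by_contra! hle
  obtain ⟨z, hz, hzx⟩ :=
    exists_strictMono_zeros_of_alternating (contDiff hQ (m := 0)).continuous hx halt
  have hQ0 : Q ≠ 0 := fun h => by simpa [h] using halt 0
  have hcard := card_le_of_forall_eq_zero hQ hQ0 (S := (range (2 * n + 1)).image z) (a := x 0) <| by
    simp only [mem_image, mem_range]
    rintro _ ⟨i, hi, rfl⟩
    refine ⟨⟨(hx.monotone i.zero_le).trans (hzx i).1.1.le, (hzx i).1.2.trans_le ?_⟩, (hzx i).2⟩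
    exact (hx.monotone (by omega)).trans hle
  rw [card_image_of_injective _ hz.injective, card_range] at hcard
  omega

theorem deriv_le_of_abs_lt_one (hQ : Q ∈ trigPoly n) (hlt : ∀ x, |Q x| < 1) (a : ℝ) :
    deriv Q a ≤ n := by
  rcases eq_or_ne n 0 with rfl | hn
  · obtain ⟨c, rfl⟩ := hQ
    simp [(hasDerivAt_trigSum 0 c a).deriv, trigSum_apply, derivCoeffs]
  by_contra! hgt
  have hn' : (0 : ℝ) < n := by positivity
  obtain ⟨hlt₁, hgt₁⟩ := abs_lt.mp (hlt a)
  set φ := arcsin (Q a)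
  have hφ_lt : φ < π / 2 := arcsin_lt_pi_div_two.mpr hgt₁
  have hφ_gt : -(π / 2) < φ := neg_pi_div_two_lt_arcsin.mpr hlt₁
  set h : ℝ → ℝ := fun x => Q x - sin (n * x + (φ - n * a))
  have hh : h ∈ trigPoly n := sub_mem hQ (sin_mul_add_mem hn _)
  have hha : h a = 0 := by
    change Q a - sin (n * a + (φ - n * a)) = 0
    rw [add_sub_cancel, sin_arcsin hlt₁.le hgt₁.le, sub_self]
  have hh' : 0 < deriv h a := by
    have hs := (((hasDerivAt_id a).const_mul (n : ℝ)).add_const (φ - n * a)).sin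
    have hh_deriv : HasDerivAt h (deriv Q a - cos (n * id a + (φ - n * a)) * (n * 1)) a :=
      (differentiable hQ a).hasDerivAt.sub hs
    rw [hh_deriv.deriv]
    nlinarith [cos_le_one (n * id a + (φ - n * a))]
  -- the extrema of the sine
  set e : ℕ → ℝ := fun m => a + (m * π - π / 2 - φ) / n
  have he : StrictMono e := fun p q hpq => by
    have : (p : ℝ) < q := by exact_mod_cast hpq
    simp only [e]; gcongr
  have he_alt : ∀ m, 0 < (-1) ^ m * h (e m) := by
    intro m
    have harg : n * e m + (φ - n * a) = m * π - π / 2 := by simp only [e]; field_simp; ring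
    simpa only [h, harg] using neg_one_pow_mul_sub_sin_pos (hlt (e m)) m
  have ha : a ∈ Set.Ioo (e 0) (e 1) := by
    have h₀ : ((0 : ℕ) * π - π / 2 - φ) / n < 0 :=
      div_neg_of_neg_of_pos (by push_cast; linarith) hn'
    have h₁ : 0 < ((1 : ℕ) * π - π / 2 - φ) / n := div_pos (by push_cast; linarith) hn'
    constructor <;> simp only [e] <;> linarith
  have he_period : e (2 * n) = e 0 + 2 * π := by simp only [e]; push_cast; field_simp; ring
  obtain ⟨x, hx, hx_alt, hx₀, hx_e⟩ :=
    exists_strictMono_alternating_of_deriv_pos he he_alt ha hha hh'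
  have hx_last : x (2 * n + 1) < e (2 * n) := by
    obtain ⟨k, rfl⟩ := Nat.exists_eq_succ_of_ne_zero hn
    rw [show 2 * (k + 1) + 1 = 2 * k + 3 by ring, hx_e]
    exact he (by omega)
  linarith [add_two_pi_lt_of_alternating hh hx hx_alt]

theorem abs_deriv_le (hQ : Q ∈ trigPoly n) {M : ℝ} (hM : ∀ x, |Q x| ≤ M) (a : ℝ) :
    |deriv Q a| ≤ n * M := by
  suffices key : ∀ P ∈ trigPoly n, (∀ x, |P x| ≤ M) → deriv P a ≤ n * M by
    have hneg := key (-Q) (neg_mem hQ) (by simpa using hM)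
    rw [deriv.neg'] at hneg
    exact abs_le.mpr ⟨by linarith, key Q hQ hM⟩
  intro P hP hPM
  have hscaled : ∀ ε > 0, deriv P a ≤ n * (M + ε) := by
    intro ε hε
    have hMε : 0 < M + ε := by linarith [(abs_nonneg _).trans (hPM 0)]
    have hlt : ∀ x, |((M + ε)⁻¹ • P) x| < 1 := fun x => by
      rw [Pi.smul_apply, smul_eq_mul, abs_mul, abs_inv, abs_of_pos hMε, inv_mul_lt_iff₀ hMε]
      linarith [hPM x]
    have := deriv_le_of_abs_lt_one (Submodule.smul_mem _ (M + ε)⁻¹ hP) hlt a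
    rw [deriv_const_smul _ (differentiable hP a), smul_eq_mul, inv_mul_le_iff₀ hMε] at this
    linarith
  by_contra! hgt
  obtain ⟨ε, hε, hnε⟩ := exists_pos_mul_lt (sub_pos.mpr hgt) n
  linarith [hscaled ε hε]

theorem abs_iteratedDeriv_le (hQ : Q ∈ trigPoly n) {M : ℝ} (hM : ∀ x, |Q x| ≤ M) (k : ℕ)
    (x : ℝ) : |iteratedDeriv k Q x| ≤ n ^ k * M := by
  induction k generalizing x with
  | zero => simpa using hM x
  | succ k ih =>
    rw [iteratedDeriv_succ, pow_succ', mul_assoc]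
    exact abs_deriv_le (iteratedDeriv_mem hQ k) ih x

theorem abs_le_of_forall_mem_Icc (hQ : Q ∈ trigPoly n) {M : ℝ}
    (hM : ∀ t ∈ Set.Icc 0 (2 * π), |Q t| ≤ M) (x : ℝ) : |Q x| ≤ M := by
  obtain ⟨y, hy, hxy⟩ := (periodic hQ).exists_mem_Ico₀ two_pi_pos x
  rw [hxy]
  exact hM y (Set.Ico_subset_Icc_self hy)

end trigPoly

theorem trig_poly_zero_order_growth_bound
    (n k : ℕ)
    (Q : ℝ → ℝ) (a b : ℕ → ℝ)
    (hQ : ∀ t, Q t = a 0 + ∑ j ∈ Finset.Icc 1 n,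
        (a j * Real.cos (j * t) + b j * Real.sin (j * t)))
    (hzero : ∀ i < k, iteratedDeriv i Q 0 = 0)
    (M : ℝ)
    (hM : IsGreatest ((fun t => |Q t|) '' Set.Icc 0 (2 * π)) M) :
    ∀ t ∈ Set.Icc 0 (2 * π), Q t ≤ M * (n : ℝ) ^ k * t ^ k / (k.factorial : ℝ) := by
  have hQ' : Q ∈ trigPoly n := ⟨(a, b), funext fun t => (hQ t).symm⟩
  have hbound : ∀ x, |Q x| ≤ M :=
    trigPoly.abs_le_of_forall_mem_Icc hQ' fun t ht => hM.2 ⟨t, ht, rfl⟩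
  intro t ht
  calc Q t ≤ ‖Q t‖ := le_abs_self _
    _ ≤ n ^ k * M * t ^ k / k.factorial :=
      norm_le_of_iteratedDeriv_eq_zero (trigPoly.contDiff hQ') hzero ht.1
        fun x _ => trigPoly.abs_iteratedDeriv_le hQ' hbound k x
    _ = M * n ^ k * t ^ k / k.factorial := by ring
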